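/- arXiv:1202.3411 — 3 statements merged into one kernel-verified Lean document; each statement's English description precedes it below -/
import Mathlib

section
/- For compositions α ⪯ γ of n, define s(α,γ) = Σ_{j=1}^{ℓ(α)} j·(Bre(γ,α)_j − 1), where Bre(γ,α) records how many parts of γ refine each part of α. For compositions γ ⪯ β of n, define g(γ,β) = Σ_{j=1}^{ℓ(β)−1} ξ(j), where ξ(j) = j if parts β_j and β_{j+1} arise from the same part of γ and ξ(j) = 0 otherwise. Then for all compositions α ⪯ β of n, Σ_{γ: α ⪯ γ ⪯ β} (−1)^{ℓ(γ)−ℓ(α)} t^{s(α,γ)} t^{g(γ,β)} equals 1 if α = β and 0 otherwise, as polynomials in t. -/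
/-- The set of proper partial sums of a composition. -/
def csub {n : ℕ} (α : Composition n) : Finset ℕ :=
  (Finset.Ico 1 α.length).image α.sizeUpTo

/-- For `α ⪯ γ`, `s(α,γ) = Σ_j j·(Bre(γ,α)_j − 1)`: each boundary of `γ` that is not a
boundary of `α` and lies inside the `j`-th part of `α` contributes `j`. -/
def swt {n : ℕ} (α γ : Composition n) : ℕ :=
  ∑ c ∈ csub γ \ csub α, (((csub α).filter (· < c)).card + 1)

/-- For `γ ⪯ β`, `g(γ,β) = Σ_{j=1}^{ℓ(β)−1} ξ_{γ,β}(j)`, where `ξ_{γ,β}(j) = j` iff the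
parts `β_j` and `β_{j+1}` arise from the same part of `γ`, i.e. iff the `j`-th partial sum
of `β` is not a boundary of `γ`. -/
def gwt {n : ℕ} (γ β : Composition n) : ℕ :=
  ∑ j ∈ Finset.Ico 1 β.length, if β.sizeUpTo j ∈ csub γ then 0 else j

lemma sizeUpTo_lt_of_lt {n : ℕ} (γ : Composition n) {i j : ℕ} (hij : i < j) (hj : j ≤ γ.length) :
    γ.sizeUpTo i < γ.sizeUpTo j := by
  calc γ.sizeUpTo i < γ.sizeUpTo (i+1) := γ.sizeUpTo_strict_mono (lt_of_lt_of_le hij hj)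
    _ ≤ γ.sizeUpTo j := γ.monotone_sizeUpTo hij

lemma sizeUpTo_injOn {n : ℕ} (γ : Composition n) {s : Finset ℕ} (hs : ∀ x ∈ s, x ≤ γ.length) :
    Set.InjOn γ.sizeUpTo s := by
  intro a ha b hb hab
  simp only [Finset.mem_coe] at ha hb
  by_contra hne
  rcases Nat.lt_or_ge a b with hl | hl
  · exact absurd hab (ne_of_lt (sizeUpTo_lt_of_lt γ hl (hs b hb)))
  · exact absurd hab.symm (ne_of_lt (sizeUpTo_lt_of_lt γ (by omega) (hs a ha)))

lemma csub_mem_Ioo {n : ℕ} {γ : Composition n} {x : ℕ} (hx : x ∈ csub γ) : 0 < x ∧ x < n := by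
  simp only [csub, Finset.mem_image, Finset.mem_Ico] at hx
  obtain ⟨j, ⟨h1, h2⟩, rfl⟩ := hx
  constructor
  · have := sizeUpTo_lt_of_lt γ (show 0 < j from h1) (le_of_lt h2)
    simpa [γ.sizeUpTo_zero] using this
  · have := sizeUpTo_lt_of_lt γ h2 le_rfl
    simpa [γ.sizeUpTo_length] using this

lemma csub_card {n : ℕ} (γ : Composition n) : (csub γ).card = γ.length - 1 := by
  rw [csub, Finset.card_image_of_injOn
    (sizeUpTo_injOn γ (fun x hx => le_of_lt (Finset.mem_Ico.mp hx).2)), Nat.card_Ico]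

lemma image_val_boundaries {n : ℕ} (γ : Composition n) :
    γ.boundaries.image Fin.val = insert 0 (insert n (csub γ)) := by
  ext x
  simp only [Composition.boundaries, Finset.mem_image, Finset.mem_map,
    Finset.mem_univ, true_and, Finset.mem_insert, csub, Finset.mem_Ico]
  constructor
  · rintro ⟨i, ⟨a, rfl⟩, rfl⟩
    have hval : ((γ.boundary a : Fin (n+1)) : ℕ) = γ.sizeUpTo a := rfl
    rw [show (γ.boundary.toEmbedding a : Fin (n+1)) = γ.boundary a from rfl, hval]
    rcases Nat.eq_zero_or_pos (a : ℕ) with h0 | h0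
    · left; rw [h0]; exact γ.sizeUpTo_zero
    rcases eq_or_lt_of_le (Nat.lt_succ_iff.mp a.isLt) with hl | hl
    · right; left; rw [hl]; exact γ.sizeUpTo_length
    · right; right; exact ⟨a, ⟨h0, hl⟩, rfl⟩
  · rintro (rfl | rfl | ⟨a, ⟨h1, h2⟩, rfl⟩)
    · exact ⟨γ.boundary 0, ⟨0, rfl⟩, by simp [γ.boundary_zero]⟩
    · exact ⟨γ.boundary (Fin.last _), ⟨Fin.last _, rfl⟩, by simp [γ.boundary_last]⟩
    · exact ⟨γ.boundary ⟨a, Nat.lt_succ_of_lt h2⟩, ⟨_, rfl⟩, rfl⟩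

lemma csub_injective {n : ℕ} : Function.Injective (csub (n := n)) := by
  intro γ δ hcd
  have hb : γ.boundaries = δ.boundaries := by
    apply Finset.image_injective (Fin.val_injective)
    rw [image_val_boundaries, image_val_boundaries, hcd]
  have : γ.toCompositionAsSet = δ.toCompositionAsSet := by
    ext1
    simpa [Composition.toCompositionAsSet_boundaries] using hb
  exact (compositionEquiv n).injective this

lemma exists_csub {n : ℕ} (S : Finset ℕ) (hS : ∀ x ∈ S, 0 < x ∧ x < n) :
    ∃ γ : Composition n, csub γ = S := by
  classical
  have hlt : ∀ m ∈ S, m < n + 1 := fun m hm => Nat.lt_succ_of_lt (hS m hm).2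
  set c : CompositionAsSet n :=
    { boundaries := insert 0 (insert (Fin.last n) (S.attachFin hlt))
      zero_mem := Finset.mem_insert_self _ _
      getLast_mem := Finset.mem_insert_of_mem (Finset.mem_insert_self _ _) } with hc
  refine ⟨c.toComposition, ?_⟩
  have hb : c.toComposition.boundaries = c.boundaries := c.toComposition_boundaries
  have himg : c.boundaries.image Fin.val = insert 0 (insert n S) := by
    rw [hc]
    simp only [Finset.image_insert, Fin.val_zero, Fin.val_last]
    congr 1
    congr 1
    ext x
    simp only [Finset.mem_image, Finset.mem_attachFin]
    constructor
    · rintro ⟨a, ha, rfl⟩; exact ha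
    · intro hx; exact ⟨⟨x, hlt x hx⟩, hx, rfl⟩
  have key : insert 0 (insert n (csub c.toComposition)) = insert 0 (insert n S) := by
    rw [← image_val_boundaries, hb, himg]
  ext x
  constructor
  · intro hx
    obtain ⟨h0, h1⟩ := csub_mem_Ioo hx
    have : x ∈ insert 0 (insert n S) := key ▸ (by simp [hx])
    simp only [Finset.mem_insert] at this
    rcases this with rfl | rfl | h
    · omega
    · omega
    · exact h
  · intro hx
    obtain ⟨h0, h1⟩ := hS x hx
    have : x ∈ insert 0 (insert n (csub c.toComposition)) := by
      rw [key]; simp [hx]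
    simp only [Finset.mem_insert] at this
    rcases this with rfl | rfl | h
    · omega
    · omega
    · exact h

lemma r_sizeUpTo {n : ℕ} (β : Composition n) {j : ℕ} (hj : j ∈ Finset.Ico 1 β.length) :
    ((csub β).filter (· ≤ β.sizeUpTo j)).card = j := by
  rw [Finset.mem_Ico] at hj
  have hset : (csub β).filter (· ≤ β.sizeUpTo j) = (Finset.Ico 1 (j+1)).image β.sizeUpTo := by
    ext x
    simp only [csub, Finset.mem_filter, Finset.mem_image, Finset.mem_Ico]
    constructor
    · rintro ⟨⟨j', ⟨h1, h2⟩, rfl⟩, hle⟩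
      refine ⟨j', ⟨h1, ?_⟩, rfl⟩
      by_contra hcon
      push_neg at hcon
      exact absurd hle (not_le.mpr (sizeUpTo_lt_of_lt β (by omega) (le_of_lt h2)))
    · rintro ⟨j', ⟨h1, h2⟩, rfl⟩
      exact ⟨⟨j', ⟨h1, by omega⟩, rfl⟩, β.monotone_sizeUpTo (by omega)⟩
  rw [hset, Finset.card_image_of_injOn
    (sizeUpTo_injOn β (fun x hx => by have := (Finset.mem_Ico.mp hx); omega)), Nat.card_Ico]
  omega

lemma gwt_eq {n : ℕ} (γ β : Composition n) :
    gwt γ β = ∑ b ∈ csub β \ csub γ, ((csub β).filter (· ≤ b)).card := by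
  classical
  have himg : ∑ b ∈ (Finset.Ico 1 β.length).image β.sizeUpTo,
      (if b ∈ csub γ then 0 else ((csub β).filter (· ≤ b)).card) =
      ∑ j ∈ Finset.Ico 1 β.length,
      (if β.sizeUpTo j ∈ csub γ then 0 else ((csub β).filter (· ≤ β.sizeUpTo j)).card) :=
    Finset.sum_image (fun x hx y hy hxy =>
      sizeUpTo_injOn β (fun z hz => le_of_lt (Finset.mem_Ico.mp hz).2) hx hy hxy)
  rw [gwt,
    Finset.sum_congr rfl (fun j hj => by
      rw [show (if β.sizeUpTo j ∈ csub γ then 0 else j) =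
          (if β.sizeUpTo j ∈ csub γ then 0 else ((csub β).filter (· ≤ β.sizeUpTo j)).card) from by
        rw [r_sizeUpTo β hj]]),
    ← himg,
    show (Finset.Ico 1 β.length).image β.sizeUpTo = csub β from rfl,
    Finset.sdiff_eq_filter, Finset.sum_filter]
  exact Finset.sum_congr rfl (fun b _ => by by_cases hb : b ∈ csub γ <;> simp [hb])

open Polynomial in
open scoped Classical in
/-- For all compositions `α ⪯ β` of `n`,
`Σ_{γ: α ⪯ γ ⪯ β} (−1)^{ℓ(γ)−ℓ(α)} t^{s(α,γ)} t^{g(γ,β)}` equals `1` if `α = β` and `0`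
otherwise, as polynomials in `t` over `ℤ`. -/
theorem FQ_G_inversion (n : ℕ) (α β : Composition n) (h : csub α ⊆ csub β) :
    (∑ γ ∈ Finset.univ.filter
        (fun γ : Composition n => csub α ⊆ csub γ ∧ csub γ ⊆ csub β),
      ((-1 : Polynomial ℤ) ^ (γ.length - α.length) * X ^ swt α γ * X ^ gwt γ β)) =
    if α = β then 1 else 0 := by
  classical
  by_cases hn : n = 0
  · subst hn
    have hempty : ∀ γ : Composition 0, csub γ = ∅ :=
      fun γ => Finset.eq_empty_of_forall_notMem
        (fun x hx => by have := csub_mem_Ioo hx; omega)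
    have hall : ∀ γ δ : Composition 0, γ = δ :=
      fun γ δ => csub_injective ((hempty γ).trans (hempty δ).symm)
    have hab : α = β := hall α β
    rw [if_pos hab]
    have hfilter : (Finset.univ.filter
        (fun γ : Composition 0 => csub α ⊆ csub γ ∧ csub γ ⊆ csub β)) = {α} := by
      apply Finset.eq_singleton_iff_unique_mem.mpr
      exact ⟨Finset.mem_filter.mpr ⟨Finset.mem_univ _, subset_refl _, h⟩,
        fun γ _ => hall γ α⟩
    have hβlen : β.length = 0 := Nat.le_zero.mp β.length_le
    rw [hfilter, Finset.sum_singleton]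
    simp [swt, gwt, hβlen]
  -- main case
  set A := csub α with hA
  set B := csub β with hB
  set M := B \ A with hM
  set w : ℕ → ℕ := fun c => (A.filter (· < c)).card + 1 with hw
  set r : ℕ → ℕ := fun b => (B.filter (· ≤ b)).card with hr
  have hlen : ∀ γ : Composition n, γ.length = (csub γ).card + 1 := by
    intro γ
    have := csub_card γ
    have hpos : 0 < γ.length := γ.length_pos_of_pos (Nat.pos_of_ne_zero hn)
    omega
  have hex : ∀ S : Finset ℕ, S ⊆ M → ∃ γ : Composition n, csub γ = A ∪ S := by
    intro S hS
    apply exists_csub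
    intro x hx
    rcases Finset.mem_union.mp hx with hx | hx
    · exact csub_mem_Ioo (h hx)
    · exact csub_mem_Ioo (Finset.mem_sdiff.mp (hS hx)).1
  set jmap : Finset ℕ → Composition n :=
    fun S => if hS : S ⊆ M then (hex S hS).choose else α with hjmap
  have hjspec : ∀ S : Finset ℕ, S ⊆ M → csub (jmap S) = A ∪ S := by
    intro S hS
    rw [hjmap]
    simp only [dif_pos hS]
    exact (hex S hS).choose_spec
  have step1 : (∑ γ ∈ Finset.univ.filter
        (fun γ : Composition n => csub α ⊆ csub γ ∧ csub γ ⊆ csub β),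
      ((-1 : Polynomial ℤ) ^ (γ.length - α.length) * X ^ swt α γ * X ^ gwt γ β)) =
      ∑ S ∈ M.powerset,
        ((-1 : Polynomial ℤ) ^ S.card * X ^ (∑ c ∈ S, w c) * X ^ (∑ b ∈ M \ S, r b)) := by
    apply Finset.sum_nbij' (fun γ => csub γ \ A) jmap
    · intro γ hγ
      obtain ⟨-, h1, h2⟩ := Finset.mem_filter.mp hγ
      exact Finset.mem_powerset.mpr (Finset.sdiff_subset_sdiff h2 (subset_refl _))
    · intro S hS
      have hS := Finset.mem_powerset.mp hS
      refine Finset.mem_filter.mpr ⟨Finset.mem_univ _, ?_, ?_⟩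
      · rw [hjspec S hS]; exact Finset.subset_union_left
      · rw [hjspec S hS]
        exact Finset.union_subset h (hS.trans (Finset.sdiff_subset))
    · intro γ hγ
      obtain ⟨-, h1, h2⟩ := Finset.mem_filter.mp hγ
      apply csub_injective
      rw [hjspec _ (Finset.sdiff_subset_sdiff h2 (subset_refl _)),
        Finset.union_sdiff_of_subset h1]
    · intro S hS
      have hS := Finset.mem_powerset.mp hS
      rw [hjspec S hS, Finset.union_sdiff_cancel_left
        (Finset.disjoint_left.mpr (fun x hx hxS => (Finset.mem_sdiff.mp (hS hxS)).2 hx))]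
    · intro γ hγ
      obtain ⟨-, h1, h2⟩ := Finset.mem_filter.mp hγ
      have hcard : γ.length - α.length = (csub γ \ A).card := by
        rw [hlen γ, hlen α, Finset.card_sdiff_of_subset h1]
        have := Finset.card_le_card h1
        omega
      have hswt : swt α γ = ∑ c ∈ csub γ \ A, w c := rfl
      have hgwt : gwt γ β = ∑ b ∈ M \ (csub γ \ A), r b := by
        rw [gwt_eq]
        congr 1
        ext x
        simp only [Finset.mem_sdiff, hM]
        constructor
        · intro ⟨hxB, hxC⟩
          exact ⟨⟨hxB, fun hxA => hxC (h1 hxA)⟩, fun ⟨hc, _⟩ => hxC hc⟩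
        · intro ⟨⟨hxB, hxA⟩, hnot⟩
          exact ⟨hxB, fun hxC => hnot ⟨hxC, hxA⟩⟩
      rw [hcard, hswt, hgwt]
  rw [step1]
  have step2 : ∑ S ∈ M.powerset,
      ((-1 : Polynomial ℤ) ^ S.card * X ^ (∑ c ∈ S, w c) * X ^ (∑ b ∈ M \ S, r b)) =
      ∏ c ∈ M, (-(X : Polynomial ℤ) ^ w c + X ^ r c) := by
    rw [Finset.prod_add]
    apply Finset.sum_congr rfl
    intro S hS
    have e1 : ∏ c ∈ S, (-(X : Polynomial ℤ) ^ w c) =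
        (-1) ^ S.card * X ^ (∑ c ∈ S, w c) := by
      calc ∏ c ∈ S, (-(X : Polynomial ℤ) ^ w c)
          = ∏ c ∈ S, ((-1) * (X : Polynomial ℤ) ^ w c) := by
            apply Finset.prod_congr rfl; intro c _; ring
        _ = (∏ _c ∈ S, (-1 : Polynomial ℤ)) * ∏ c ∈ S, (X : Polynomial ℤ) ^ w c :=
            Finset.prod_mul_distrib
        _ = (-1) ^ S.card * X ^ (∑ c ∈ S, w c) := by
            rw [Finset.prod_const, Finset.prod_pow_eq_pow_sum]
    have e2 : ∏ b ∈ M \ S, (X : Polynomial ℤ) ^ r b = X ^ (∑ b ∈ M \ S, r b) :=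
      Finset.prod_pow_eq_pow_sum _ _ _
    rw [e1, e2, mul_assoc]
  rw [step2]
  by_cases hMe : M = ∅
  · have hBA : B ⊆ A := Finset.sdiff_eq_empty_iff_subset.mp hMe
    have : α = β := csub_injective (Finset.Subset.antisymm h hBA)
    rw [if_pos this, hMe, Finset.prod_empty]
  · have hne : α ≠ β := by
      intro hcon
      apply hMe
      have hAB : A = B := by rw [hA, hB, hcon]
      rw [hM, hAB, Finset.sdiff_self]
    rw [if_neg hne]
    have hMne : M.Nonempty := Finset.nonempty_of_ne_empty hMe
    set c₀ := M.min' hMne with hc₀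
    apply Finset.prod_eq_zero (M.min'_mem hMne)
    have hrw : r c₀ = w c₀ := by
      have hc₀M : c₀ ∈ M := M.min'_mem hMne
      obtain ⟨hc₀B, hc₀A⟩ := Finset.mem_sdiff.mp hc₀M
      have hset : B.filter (· ≤ c₀) = insert c₀ (A.filter (· < c₀)) := by
        ext b
        simp only [Finset.mem_filter, Finset.mem_insert]
        constructor
        · intro ⟨hbB, hble⟩
          rcases eq_or_lt_of_le hble with rfl | hblt
          · exact Or.inl rfl
          · right
            refine ⟨?_, hblt⟩
            by_contra hbA
            have hbM : b ∈ M := Finset.mem_sdiff.mpr ⟨hbB, hbA⟩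
            exact absurd (M.min'_le b hbM) (not_le.mpr hblt)
        · rintro (rfl | ⟨hbA, hblt⟩)
          · exact ⟨hc₀B, le_refl _⟩
          · exact ⟨h hbA, le_of_lt hblt⟩
      have hnotmem : c₀ ∉ A.filter (· < c₀) := by
        intro hcon
        exact absurd (Finset.mem_filter.mp hcon).2 (lt_irrefl c₀)
      rw [hr, hw]
      simp only
      rw [hset, Finset.card_insert_of_notMem hnotmem]
    rw [hrw]
    ring
end

section
/- For subsets A, B of {1,…,n−1} with A having no two consecutive elements and A ⊆ B ∪ (B+1), the number of subsets C ⊆ B with A ⊆ C △ (C+1) equals 2^{|B \ (A ∪ (A−1))| + |{a ∈ A : a−1 ∈ B and a ∈ B}|}, where B+1 = {b+1 : b ∈ B} \ {n}, A−1 = {a−1 : a ∈ A} \ {0}, and △ is symmetric difference. In particular, if A ⊄ B ∪ (B+1) then no such C exists. -/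
/-- `S + 1 = {s+1 : s ∈ S} \ {n}`. -/
def shiftUp (n : ℕ) (S : Finset ℕ) : Finset ℕ := (S.image (· + 1)).erase n

/-- `S − 1 = {s−1 : s ∈ S} \ {0}`. -/
def shiftDown (S : Finset ℕ) : Finset ℕ := (S.image (· - 1)).erase 0

/-!
For `1 ≤ a < n` we have `a ∈ C + 1 ↔ a - 1 ∈ C`, so `A ⊆ C △ (C + 1)` says that every
`a ∈ A` separates the pair `{a, a - 1}`: exactly one of its points lies in `C`. As `A` has no
two consecutive elements these pairs are disjoint, so the constraints are independent: points of
`B` outside every pair are free, and on a pair `C` is a singleton of `B ∩ {a, a - 1}`, which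
leaves `#(B ∩ {a, a - 1}) ∈ {0, 1, 2}` choices.
-/

open Finset

section XorPairs

variable {α : Type*} [DecidableEq α]

theorem card_filter_powerset_union {B₁ B₂ : Finset α} (h : Disjoint B₁ B₂)
    (P P₁ P₂ : Finset α → Prop) [DecidablePred P] [DecidablePred P₁] [DecidablePred P₂]
    (hP : ∀ C ⊆ B₁ ∪ B₂, P C ↔ P₁ (C ∩ B₁) ∧ P₂ (C ∩ B₂)) :
    #((B₁ ∪ B₂).powerset.filter P) =
      #(B₁.powerset.filter P₁) * #(B₂.powerset.filter P₂) := by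
  have hparts {C₁ C₂ : Finset α} (h₁ : C₁ ⊆ B₁) (h₂ : C₂ ⊆ B₂) :
      (C₁ ∪ C₂) ∩ B₁ = C₁ ∧ (C₁ ∪ C₂) ∩ B₂ = C₂ := by
    rw [disjoint_left] at h
    constructor <;> ext z <;> grind
  rw [← card_product]
  refine card_nbij' (fun C => (C ∩ B₁, C ∩ B₂)) (fun D => D.1 ∪ D.2) ?_ ?_ ?_ ?_
  · intro C hC
    simp only [mem_coe, mem_filter, mem_powerset, mem_product] at hC ⊢
    have := (hP C hC.1).1 hC.2
    exact ⟨⟨inter_subset_right, this.1⟩, inter_subset_right, this.2⟩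
  · rintro ⟨C₁, C₂⟩ hD
    simp only [mem_coe, mem_filter, mem_powerset, mem_product] at hD ⊢
    have hsub := union_subset_union hD.1.1 hD.2.1
    rw [hP _ hsub, (hparts hD.1.1 hD.2.1).1, (hparts hD.1.1 hD.2.1).2]
    exact ⟨hsub, hD.1.2, hD.2.2⟩
  · intro C hC
    simp only [mem_coe, mem_filter, mem_powerset] at hC
    simp only [← inter_union_distrib_left, inter_eq_left.2 hC.1]
  · rintro ⟨C₁, C₂⟩ hD
    simp only [mem_coe, mem_filter, mem_powerset, mem_product] at hD
    simp only [hparts hD.1.1 hD.2.1]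

theorem card_filter_powerset_xor {x y : α} (hxy : x ≠ y) {D : Finset α} (hD : D ⊆ {x, y}) :
    #(D.powerset.filter (fun C => Xor (x ∈ C) (y ∈ C))) = #D := by
  suffices D.powerset.filter (fun C => Xor (x ∈ C) (y ∈ C)) = D.powersetCard 1 by
    rw [this, card_powersetCard, Nat.choose_one_right]
  ext C
  simp only [mem_filter, mem_powerset, mem_powersetCard, card_eq_one, and_congr_right_iff]
  intro hC
  have := hC.trans hD
  constructor
  · rintro (⟨hx, hy⟩ | ⟨hy, hx⟩)
    · exact ⟨x, eq_singleton_iff_unique_mem.2 ⟨hx, fun z hz => by grind⟩⟩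
    · exact ⟨y, eq_singleton_iff_unique_mem.2 ⟨hy, fun z hz => by grind⟩⟩
  · rintro ⟨z, rfl⟩
    grind

theorem card_filter_powerset_forall_xor (p : α → α) (A B : Finset α)
    (hp : ∀ a ∈ A, a ≠ p a)
    (hA : (A : Set α).PairwiseDisjoint (fun a => ({a, p a} : Finset α))) :
    #(B.powerset.filter (fun C => ∀ a ∈ A, Xor (a ∈ C) (p a ∈ C))) =
      2 ^ #(B \ (A ∪ A.image p)) * ∏ a ∈ A, #(B ∩ {a, p a}) := by
  induction A using Finset.induction_on generalizing B with
  | empty => simp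
  | insert a A ha ih =>
    rw [coe_insert, Set.pairwiseDisjoint_insert_of_notMem (mem_coe.not.2 ha)] at hA
    obtain ⟨hA, hdisj⟩ := hA
    have hsplit : ∀ C ⊆ B \ {a, p a} ∪ B ∩ {a, p a},
        (∀ a' ∈ insert a A, Xor (a' ∈ C) (p a' ∈ C)) ↔
          (∀ a' ∈ A, Xor (a' ∈ C ∩ (B \ {a, p a})) (p a' ∈ C ∩ (B \ {a, p a}))) ∧
            Xor (a ∈ C ∩ (B ∩ {a, p a})) (p a ∈ C ∩ (B ∩ {a, p a})) := by
      intro C hC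
      rw [sdiff_union_inter] at hC
      have hout (a' : α) (ha' : a' ∈ A) (z : α) (hz : z ∈ ({a', p a'} : Finset α)) :
          z ∈ C ∩ (B \ {a, p a}) ↔ z ∈ C := by
        have := disjoint_right.1 (hdisj a' ha') hz
        grind
      have hin (z : α) (hz : z ∈ ({a, p a} : Finset α)) : z ∈ C ∩ (B ∩ {a, p a}) ↔ z ∈ C := by
        grind
      rw [forall_mem_insert, and_comm, hin a (by simp), hin (p a) (by simp)]
      refine and_congr_left' (forall₂_congr fun a' ha' => ?_)
      rw [hout a' ha' a' (by simp), hout a' ha' (p a') (by simp)]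
    have hfree : (B \ {a, p a}) \ (A ∪ A.image p) = B \ (insert a A ∪ (insert a A).image p) := by
      ext z
      simp only [mem_sdiff, mem_union, mem_insert, mem_singleton, image_insert]
      tauto
    have hblock (a' : α) (ha' : a' ∈ A) : (B \ {a, p a}) ∩ {a', p a'} = B ∩ {a', p a'} := by
      have := disjoint_right.1 (hdisj a' ha')
      ext z
      grind
    conv_lhs => rw [← sdiff_union_inter B {a, p a}]
    rw [card_filter_powerset_union (disjoint_sdiff_inter _ _) _
        (fun C => ∀ a' ∈ A, Xor (a' ∈ C) (p a' ∈ C)) (fun C => Xor (a ∈ C) (p a ∈ C)) hsplit,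
      ih _ (fun a' ha' => hp a' (mem_insert_of_mem ha')) hA,
      card_filter_powerset_xor (hp a (mem_insert_self a A)) inter_subset_right, prod_insert ha,
      hfree, prod_congr rfl fun a' ha' => congrArg card (hblock a' ha')]
    ring

end XorPairs

lemma mem_shiftUp {n x : ℕ} {S : Finset ℕ} (hx : 1 ≤ x) (hxn : x ≠ n) :
    x ∈ shiftUp n S ↔ x - 1 ∈ S := by
  simp only [shiftUp, mem_erase, mem_image, hxn, ne_eq, not_false_eq_true, true_and]
  exact ⟨by rintro ⟨s, hs, rfl⟩; simpa using hs, fun hs => ⟨x - 1, hs, by omega⟩⟩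

lemma sdiff_union_shiftDown {A B : Finset ℕ} (hB : 0 ∉ B) :
    B \ (A ∪ shiftDown A) = B \ (A ∪ A.image (· - 1)) := by
  ext x
  by_cases hx : x = 0
  · simp [hx, hB]
  · simp [shiftDown, hx]

lemma subset_union_shiftUp_iff {n : ℕ} {A B : Finset ℕ} (hA : A ⊆ Icc 1 (n - 1)) :
    A ⊆ B ∪ shiftUp n B ↔ ∀ a ∈ A, a ∈ B ∨ a - 1 ∈ B := by
  refine forall₂_congr fun a ha => ?_
  have := mem_Icc.1 (hA ha)
  rw [mem_union, mem_shiftUp (by omega) (by omega)]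

lemma subset_sdiff_shiftUp_union_iff {n : ℕ} {A C : Finset ℕ} (hA : A ⊆ Icc 1 (n - 1)) :
    A ⊆ (C \ shiftUp n C) ∪ (shiftUp n C \ C) ↔ ∀ a ∈ A, Xor (a ∈ C) (a - 1 ∈ C) := by
  refine forall₂_congr fun a ha => ?_
  have := mem_Icc.1 (hA ha)
  rw [mem_union, mem_sdiff, mem_sdiff, mem_shiftUp (by omega) (by omega), xor_def]

lemma pairwiseDisjoint_pred_pair {A : Finset ℕ} (hA : 0 ∉ A)
    (hcons : ∀ i : ℕ, ¬(i ∈ A ∧ i + 1 ∈ A)) :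
    (A : Set ℕ).PairwiseDisjoint fun a => ({a, a - 1} : Finset ℕ) := by
  intro a ha b hb hab
  have ha0 : a ≠ 0 := fun h => hA (h ▸ ha)
  have hb0 : b ≠ 0 := fun h => hA (h ▸ hb)
  rw [Function.onFun, disjoint_left]
  intro x hxa hxb
  simp only [mem_insert, mem_singleton] at hxa hxb
  rcases hxa with rfl | rfl <;> rcases hxb with h | h
  · exact hab h
  · exact hcons x ⟨ha, by rwa [show x + 1 = b by omega]⟩
  · exact hcons b ⟨hb, by rwa [show b + 1 = a by omega]⟩
  · exact hab (by omega)

lemma prod_card_inter_pred_pair {A B : Finset ℕ} (hA : 0 ∉ A)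
    (hcover : ∀ a ∈ A, a ∈ B ∨ a - 1 ∈ B) :
    ∏ a ∈ A, #(B ∩ {a, a - 1}) = 2 ^ #(A.filter fun a => a - 1 ∈ B ∧ a ∈ B) := by
  have hpair (a : ℕ) (ha : a ∈ A) :
      #(B ∩ {a, a - 1}) = 2 ^ (if a - 1 ∈ B ∧ a ∈ B then 1 else 0) := by
    have hne : a ≠ a - 1 := by have := ne_of_mem_of_not_mem ha hA; omega
    have := hcover a ha
    by_cases h₁ : a ∈ B <;> by_cases h₂ : a - 1 ∈ B <;>
      simp_all [inter_insert_of_mem, inter_insert_of_notMem]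
  rw [prod_congr rfl hpair, prod_pow_eq_pow_sum, card_filter]

/-- For `A, B ⊆ {1,…,n−1}` with `A` having no two consecutive elements and
`A ⊆ B ∪ (B+1)`, the number of `C ⊆ B` with `A ⊆ C △ (C+1)` equals
`2^{|B \ (A ∪ (A−1))| + |{a ∈ A : a−1 ∈ B and a ∈ B}|}`; if `A ⊄ B ∪ (B+1)` there is
no such `C`. -/
theorem count_peak_subsets (n : ℕ) (A B : Finset ℕ)
    (hA : A ⊆ Finset.Icc 1 (n - 1)) (hB : B ⊆ Finset.Icc 1 (n - 1))
    (hcons : ∀ i : ℕ, ¬(i ∈ A ∧ i + 1 ∈ A)) :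
    (A ⊆ B ∪ shiftUp n B →
      (B.powerset.filter
          (fun C => A ⊆ (C \ shiftUp n C) ∪ (shiftUp n C \ C))).card =
        2 ^ ((B \ (A ∪ shiftDown A)).card +
          (A.filter (fun a => a - 1 ∈ B ∧ a ∈ B)).card)) ∧
    (¬(A ⊆ B ∪ shiftUp n B) →
      (B.powerset.filter
          (fun C => A ⊆ (C \ shiftUp n C) ∪ (shiftUp n C \ C))).card = 0) := by
  have hA0 : 0 ∉ A := fun h => by simpa using hA h
  have hB0 : 0 ∉ B := fun h => by simpa using hB h
  have hcount : #(B.powerset.filter fun C => A ⊆ (C \ shiftUp n C) ∪ (shiftUp n C \ C)) =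
      2 ^ #(B \ (A ∪ shiftDown A)) * ∏ a ∈ A, #(B ∩ {a, a - 1}) := by
    rw [filter_congr fun C _ => subset_sdiff_shiftUp_union_iff hA,
      card_filter_powerset_forall_xor (· - 1) A B (fun a ha => by have := ne_of_mem_of_not_mem ha hA0; omega)
        (pairwiseDisjoint_pred_pair hA0 hcons),
      sdiff_union_shiftDown hB0]
  rw [subset_union_shiftUp_iff hA, hcount]
  refine ⟨fun hcover => ?_, fun hcover => ?_⟩
  · rw [prod_card_inter_pred_pair hA0 hcover, pow_add]
  · simp only [not_forall, not_or, exists_prop] at hcover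
    obtain ⟨a, ha, haB, ha₁B⟩ := hcover
    rw [prod_eq_zero ha (by simp [inter_insert_of_notMem haB, ha₁B]), mul_zero]
end

section
/- Standardization is a bijection: for a skew shape λ/μ with n cells and any N ≥ n, the map sending a semistandard Young tableau T of shape λ/μ with entries in {1,…,N} to the pair (stdz(T), w), where stdz(T) is its standardization and w is the weakly increasing word listing the multiset of entries of T, is a bijection onto the set of pairs (S, w) where S is a standard Young tableau of shape λ/μ and w = w₁ ≤ ⋯ ≤ w_n is a word in {1,…,N} such that w_k < w_{k+1} whenever k+1 appears in a strictly lower row of S than k. -/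
/-- The cells of the skew diagram `λ/μ`. -/
def skewCells (lam mu : YoungDiagram) : Finset (ℕ × ℕ) := lam.cells \ mu.cells

/-- `T` is a semistandard filling of the cell set `D` with entries in `{1,…,N}`
(and `0` outside `D`): entries weakly increase along rows and strictly increase down
columns. -/
def IsSSYTOn (D : Finset (ℕ × ℕ)) (N : ℕ) (T : ℕ × ℕ → ℕ) : Prop :=
  (∀ c ∈ D, 1 ≤ T c ∧ T c ≤ N) ∧ (∀ c ∉ D, T c = 0) ∧
  (∀ i j1 j2, (i, j1) ∈ D → (i, j2) ∈ D → j1 ≤ j2 → T (i, j1) ≤ T (i, j2)) ∧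
  (∀ i1 i2 j, (i1, j) ∈ D → (i2, j) ∈ D → i1 < i2 → T (i1, j) < T (i2, j))

/-- `T` is a standard filling of `D`: a semistandard filling using each of `1,…,|D|`
exactly once. -/
def IsStdOn (D : Finset (ℕ × ℕ)) (T : ℕ × ℕ → ℕ) : Prop :=
  IsSSYTOn D D.card T ∧ ∀ k, 1 ≤ k → k ≤ D.card → ∃! c, c ∈ D ∧ T c = k

/-- The standardization of a filling `T` of `D`: the `m_i` occurrences of each value `i`,
taken from left to right, are replaced by `M_{i-1}+1, …, M_i`. -/
def stdzOn (D : Finset (ℕ × ℕ)) (T : ℕ × ℕ → ℕ) : ℕ × ℕ → ℕ := fun c =>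
  if c ∈ D then
    (D.filter (fun c' => T c' < T c ∨ (T c' = T c ∧ c'.2 < c.2))).card + 1
  else 0

/-- The weakly increasing word listing the multiset of entries of `T` (`0` outside
positions `1,…,|D|`): the `k`-th letter is the entry of the cell standardizing to `k`. -/
def wordOf (D : Finset (ℕ × ℕ)) (T : ℕ × ℕ → ℕ) : ℕ → ℕ := fun k =>
  (D.filter (fun c => stdzOn D T c = k)).sum T
section Aux

/-- The left-to-right reading order on cells induced by a filling. -/
def CRel (T : ℕ × ℕ → ℕ) (c' c : ℕ × ℕ) : Prop :=
  T c' < T c ∨ (T c' = T c ∧ c'.2 < c.2)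

instance CRel.decidable (T : ℕ × ℕ → ℕ) (c' c : ℕ × ℕ) : Decidable (CRel T c' c) :=
  inferInstanceAs (Decidable (_ ∨ _))

variable {D : Finset (ℕ × ℕ)} {N : ℕ} {T : ℕ × ℕ → ℕ}

lemma CRel.trans {a b c : ℕ × ℕ} (h1 : CRel T a b) (h2 : CRel T b c) : CRel T a c := by
  unfold CRel at *; omega

lemma CRel.irrefl (c : ℕ × ℕ) : ¬ CRel T c c := by unfold CRel; omega

lemma CRel.le {a b : ℕ × ℕ} (h : CRel T a b) : T a ≤ T b := by unfold CRel at h; omega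

/-- northwest strictness for semistandard fillings on a "skew-closed" cell set -/
lemma ssyt_nw
    (hcl : ∀ i1 i2 j1 j2, i1 ≤ i2 → j1 ≤ j2 → (i1,j1) ∈ D → (i2,j2) ∈ D → (i1,j2) ∈ D)
    (hT : IsSSYTOn D N T) {i1 i2 j1 j2 : ℕ} (hi : i1 < i2) (hj : j1 ≤ j2)
    (h1 : (i1,j1) ∈ D) (h2 : (i2,j2) ∈ D) : T (i1,j1) < T (i2,j2) := by
  have hm : (i1, j2) ∈ D := hcl i1 i2 j1 j2 hi.le hj h1 h2
  exact lt_of_le_of_lt (hT.2.2.1 i1 j1 j2 h1 hm hj) (hT.2.2.2 i1 i2 j2 hm h2 hi)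

lemma crel_total (hT : IsSSYTOn D N T) {c c' : ℕ × ℕ} (hc : c ∈ D) (hc' : c' ∈ D)
    (hne : c ≠ c') : CRel T c c' ∨ CRel T c' c := by
  obtain ⟨a1, a2⟩ := c
  obtain ⟨b1, b2⟩ := c'
  rcases lt_trichotomy a2 b2 with h2 | h2 | h2
  · unfold CRel; omega
  · subst h2
    have h1 : a1 ≠ b1 := fun h => hne (by rw [h])
    rcases lt_trichotomy a1 b1 with h1' | h1' | h1'
    · exact Or.inl (Or.inl (hT.2.2.2 a1 b1 a2 hc hc' h1'))
    · exact absurd h1' h1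
    · exact Or.inr (Or.inl (hT.2.2.2 b1 a1 a2 hc' hc h1'))
  · unfold CRel; omega

lemma stdz_eq (hc : c ∈ D) :
    stdzOn D T c = (D.filter (fun c' => CRel T c' c)).card + 1 := by
  rw [stdzOn, if_pos hc]; rfl

lemma stdz_lt {c c' : ℕ × ℕ} (hc' : c' ∈ D) (hc : c ∈ D) (h : CRel T c' c) :
    stdzOn D T c' < stdzOn D T c := by
  rw [stdz_eq hc', stdz_eq hc]
  have hsub : D.filter (fun a => CRel T a c') ⊆ D.filter (fun a => CRel T a c) := by
    intro a ha
    simp only [Finset.mem_filter] at *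
    exact ⟨ha.1, ha.2.trans h⟩
  have hmem : c' ∈ D.filter (fun a => CRel T a c) := Finset.mem_filter.2 ⟨hc', h⟩
  have hnot : c' ∉ D.filter (fun a => CRel T a c') := by
    simp only [Finset.mem_filter]
    exact fun h' => CRel.irrefl c' h'.2
  have := Finset.card_lt_card ((Finset.ssubset_iff_of_subset hsub).2 ⟨c', hmem, hnot⟩)
  omega

lemma stdz_inj (hT : IsSSYTOn D N T) {c c' : ℕ × ℕ} (hc : c ∈ D) (hc' : c' ∈ D)
    (h : stdzOn D T c = stdzOn D T c') : c = c' := by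
  by_contra hne
  rcases crel_total hT hc hc' hne with h' | h'
  · exact absurd h (Nat.ne_of_lt (stdz_lt hc hc' h'))
  · exact absurd h.symm (Nat.ne_of_lt (stdz_lt hc' hc h'))

lemma stdz_bounds (hc : c ∈ D) : 1 ≤ stdzOn D T c ∧ stdzOn D T c ≤ D.card := by
  rw [stdz_eq hc]
  have hsub : D.filter (fun a => CRel T a c) ⊆ D := Finset.filter_subset _ _
  have hnot : c ∉ D.filter (fun a => CRel T a c) := by
    simp only [Finset.mem_filter]; exact fun h' => CRel.irrefl c h'.2
  have := Finset.card_lt_card ((Finset.ssubset_iff_of_subset hsub).2 ⟨c, hc, hnot⟩)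
  omega

lemma stdz_surj (hT : IsSSYTOn D N T) {k : ℕ} (h1 : 1 ≤ k) (h2 : k ≤ D.card) :
    ∃ c ∈ D, stdzOn D T c = k := by
  have himg : D.image (stdzOn D T) = Finset.Icc 1 D.card := by
    apply Finset.eq_of_subset_of_card_le
    · intro x hx
      obtain ⟨c, hc, rfl⟩ := Finset.mem_image.1 hx
      exact Finset.mem_Icc.2 (stdz_bounds hc)
    · rw [Finset.card_image_of_injOn (fun a ha b hb => stdz_inj hT ha hb),
        Nat.card_Icc]
      omega
  have : k ∈ D.image (stdzOn D T) := by
    rw [himg]; exact Finset.mem_Icc.2 ⟨h1, h2⟩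
  simpa using this


lemma wordOf_stdz (hT : IsSSYTOn D N T) {c : ℕ × ℕ} (hc : c ∈ D) :
    wordOf D T (stdzOn D T c) = T c := by
  have h : D.filter (fun a => stdzOn D T a = stdzOn D T c) = {c} := by
    ext a
    simp only [Finset.mem_filter, Finset.mem_singleton]
    constructor
    · rintro ⟨ha, he⟩; exact stdz_inj hT ha hc he
    · rintro rfl; exact ⟨hc, rfl⟩
  rw [wordOf, h, Finset.sum_singleton]

lemma wordOf_zero {k : ℕ} (h : k < 1 ∨ D.card < k) : wordOf D T k = 0 := by
  rw [wordOf, Finset.filter_false_of_mem, Finset.sum_empty]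
  intro c hc hk
  have := stdz_bounds (T := T) hc
  omega

lemma chain_mono {w : ℕ → ℕ} {n : ℕ} (h : ∀ k, 1 ≤ k → k + 1 ≤ n → w k ≤ w (k+1)) :
    ∀ a b, 1 ≤ a → b ≤ n → a ≤ b → w a ≤ w b := by
  intro a b ha hb hab
  induction b with
  | zero => omega
  | succ b ih =>
    rcases Nat.eq_or_lt_of_le hab with h' | h'
    · rw [h']
    · exact le_trans (ih (by omega) (by omega)) (h b (by omega) hb)

lemma word_strict {S : ℕ × ℕ → ℕ} {w : ℕ → ℕ} (hstd : IsStdOn D S)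
    (hmono : ∀ k, 1 ≤ k → k + 1 ≤ D.card → w k ≤ w (k + 1))
    (hdesc : ∀ k c c', 1 ≤ k → k + 1 ≤ D.card → c ∈ D → c' ∈ D →
      S c = k → S c' = k + 1 → c.1 < c'.1 → w k < w (k + 1)) :
    ∀ b a ca cb, 1 ≤ a → b ≤ D.card → a < b → ca ∈ D → cb ∈ D → S ca = a → S cb = b →
      ca.1 < cb.1 → w a < w b := by
  intro b
  induction b with
  | zero => intro a ca cb h1 h2 h3; omega
  | succ b ih =>
    intro a ca cb ha hb hab hca hcb hSa hSb hrow
    rcases Nat.eq_or_lt_of_le (Nat.lt_succ_iff.1 hab) with h' | hlt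
    · subst h'
      exact hdesc a ca cb ha hb hca hcb hSa hSb hrow
    · obtain ⟨cm, hcm⟩ := (hstd.2 b (by omega) (by omega)).exists
      by_cases hr : ca.1 < cm.1
      · exact lt_of_lt_of_le (ih a ca cm ha (by omega) hlt hca hcm.1 hSa hcm.2 hr)
          (hmono b (by omega) hb)
      · have hr2 : cm.1 < cb.1 := by omega
        exact lt_of_le_of_lt
          (chain_mono hmono a b ha (by omega) (by omega))
          (hdesc b cm cb (by omega) hb hcm.1 hcb hcm.2 hSb hr2)

end Aux

/-- Standardization is a bijection: for a skew shape `λ/μ` with `n` cells and `N ≥ n`,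
`T ↦ (stdz T, w)` is a bijection from semistandard tableaux of shape `λ/μ` with entries
in `{1,…,N}` onto pairs `(S, w)` of a standard tableau `S` of shape `λ/μ` and a weakly
increasing word `w₁ ≤ ⋯ ≤ w_n` in `{1,…,N}` with `w_k < w_{k+1}` whenever `k+1` lies in a
strictly lower row of `S` than `k`. -/
theorem standardization_bijection (lam mu : YoungDiagram)
    (hmu : mu.cells ⊆ lam.cells) (n N : ℕ)
    (hn : (skewCells lam mu).card = n) (hN : n ≤ N) :
    Set.BijOn
      (fun T => (stdzOn (skewCells lam mu) T, wordOf (skewCells lam mu) T))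
      {T | IsSSYTOn (skewCells lam mu) N T}
      {Sw : ((ℕ × ℕ) → ℕ) × (ℕ → ℕ) |
        IsStdOn (skewCells lam mu) Sw.1 ∧
        (∀ k, 1 ≤ k → k ≤ n → 1 ≤ Sw.2 k ∧ Sw.2 k ≤ N) ∧
        (∀ k, k < 1 ∨ n < k → Sw.2 k = 0) ∧
        (∀ k, 1 ≤ k → k + 1 ≤ n → Sw.2 k ≤ Sw.2 (k + 1)) ∧
        (∀ k c c', 1 ≤ k → k + 1 ≤ n →
          c ∈ skewCells lam mu → c' ∈ skewCells lam mu →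
          Sw.1 c = k → Sw.1 c' = k + 1 → c.1 < c'.1 → Sw.2 k < Sw.2 (k + 1))} := by
  subst hn
  set D := skewCells lam mu with hD
  have hcl : ∀ i1 i2 j1 j2, i1 ≤ i2 → j1 ≤ j2 → (i1,j1) ∈ D → (i2,j2) ∈ D →
      (i1,j2) ∈ D := by
    intro i1 i2 j1 j2 h1 h2 hm1 hm2
    simp only [hD, skewCells, Finset.mem_sdiff, YoungDiagram.mem_cells] at *
    exact ⟨lam.up_left_mem h1 le_rfl hm2.1,
      fun hmem => hm1.2 (mu.up_left_mem le_rfl h2 hmem)⟩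
  refine ⟨?_, ?_, ?_⟩
  · -- MapsTo
    intro T hT
    simp only [Set.mem_setOf_eq] at hT ⊢
    refine ⟨⟨⟨?_, ?_, ?_, ?_⟩, ?_⟩, ?_, ?_, ?_, ?_⟩
    · exact fun c hc => stdz_bounds hc
    · intro c hc; rw [stdzOn, if_neg hc]
    · intro i j1 j2 h1 h2 hj
      rcases Nat.eq_or_lt_of_le hj with h' | h'
      · rw [h']
      · refine (stdz_lt h1 h2 ?_).le
        rcases Nat.eq_or_lt_of_le (hT.2.2.1 i j1 j2 h1 h2 hj) with h | h
        · exact Or.inr ⟨h, h'⟩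
        · exact Or.inl h
    · exact fun i1 i2 j h1 h2 hi => stdz_lt h1 h2 (Or.inl (hT.2.2.2 i1 i2 j h1 h2 hi))
    · intro k hk1 hk2
      obtain ⟨c, hc, hck⟩ := stdz_surj hT hk1 hk2
      exact ⟨c, ⟨hc, hck⟩, fun a ⟨ha, hak⟩ => stdz_inj hT ha hc (hak.trans hck.symm)⟩
    · intro k hk1 hk2
      obtain ⟨c, hc, hck⟩ := stdz_surj hT hk1 hk2
      rw [← hck, wordOf_stdz hT hc]
      exact hT.1 c hc
    · exact fun k hk => wordOf_zero hk
    · intro k hk1 hk2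
      obtain ⟨c, hc, hck⟩ := stdz_surj hT hk1 (by omega)
      obtain ⟨c', hc', hck'⟩ := stdz_surj hT (k := k+1) (by omega) hk2
      have hne : c ≠ c' := fun h => by rw [h, hck'] at hck; omega
      rcases crel_total hT hc hc' hne with hrel | hrel
      · rw [← hck', ← hck, wordOf_stdz hT hc, wordOf_stdz hT hc']
        exact hrel.le
      · have := stdz_lt hc' hc hrel; omega
    · intro k c c' hk1 hk2 hc hc' hSc hSc' hrow
      have hne : c ≠ c' := fun h => by rw [h, hSc'] at hSc; omega
      rcases crel_total hT hc hc' hne with hrel | hrel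
      · rw [← hSc', ← hSc, wordOf_stdz hT hc, wordOf_stdz hT hc']
        rcases hrel with h | ⟨h, h2⟩
        · exact h
        · have := ssyt_nw hcl hT hrow h2.le (by simpa using hc) (by simpa using hc')
          simp only [Prod.mk.eta] at this
          omega
      · have := stdz_lt hc' hc hrel
        rw [hSc, hSc'] at this; omega
  · -- InjOn
    intro T hT T' hT' heq
    simp only [Set.mem_setOf_eq] at hT hT'
    simp only [Prod.mk.injEq] at heq
    funext c
    by_cases hc : c ∈ D
    · calc T c = wordOf D T (stdzOn D T c) := (wordOf_stdz hT hc).symm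
        _ = wordOf D T' (stdzOn D T' c) := by rw [heq.1, heq.2]
        _ = T' c := wordOf_stdz hT' hc
    · rw [hT.2.1 c hc, hT'.2.1 c hc]
  · -- SurjOn
    rintro ⟨S, w⟩ hSw
    simp only [Set.mem_setOf_eq] at hSw
    obtain ⟨hstd, hw1, hw0, hwm, hwd⟩ := hSw
    classical
    set T : ℕ × ℕ → ℕ := fun c => if c ∈ D then w (S c) else 0 with hTdef
    have hSb : ∀ c ∈ D, 1 ≤ S c ∧ S c ≤ D.card := hstd.1.1
    have hS0 : ∀ c ∉ D, S c = 0 := hstd.1.2.1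
    have hSinj : ∀ c ∈ D, ∀ c' ∈ D, S c = S c' → c = c' := by
      intro c hc c' hc' he
      have hb := hSb c hc
      obtain ⟨u, _, huniq⟩ := hstd.2 (S c) hb.1 hb.2
      rw [huniq c ⟨hc, rfl⟩, huniq c' ⟨hc', he.symm⟩]
    have hwchain := chain_mono hwm
    have hws := word_strict hstd hwm hwd
    have hTmem : ∀ c ∈ D, T c = w (S c) := fun c hc => if_pos hc
    have hT0 : ∀ c ∉ D, T c = 0 := fun c hc => if_neg hc
    clear_value T
    have hT : IsSSYTOn D N T := by
      refine ⟨?_, ?_, ?_, ?_⟩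
      · intro c hc; rw [hTmem c hc]; exact hw1 _ (hSb c hc).1 (hSb c hc).2
      · exact hT0
      · intro i j1 j2 h1 h2 hj
        rw [hTmem _ h1, hTmem _ h2]
        exact hwchain _ _ (hSb _ h1).1 (hSb _ h2).2 (hstd.1.2.2.1 i j1 j2 h1 h2 hj)
      · intro i1 i2 j h1 h2 hi
        rw [hTmem _ h1, hTmem _ h2]
        exact hws (S (i2,j)) (S (i1,j)) (i1,j) (i2,j) (hSb _ h1).1 (hSb _ h2).2
          (hstd.1.2.2.2 i1 i2 j h1 h2 hi) h1 h2 rfl rfl hi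
    have hkey : ∀ c' ∈ D, ∀ c ∈ D, S c' < S c → CRel T c' c := by
      intro c' hc' c hc hlt
      have hle : T c' ≤ T c := by
        rw [hTmem _ hc', hTmem _ hc]
        exact hwchain _ _ (hSb _ hc').1 (hSb _ hc).2 hlt.le
      rcases Nat.eq_or_lt_of_le hle with h | h
      swap
      · exact Or.inl h
      refine Or.inr ⟨h, ?_⟩
      by_contra hge
      push_neg at hge
      obtain ⟨a1, a2⟩ := c'
      obtain ⟨b1, b2⟩ := c
      simp only at hge ⊢
      have heqw : w (S (a1,a2)) = w (S (b1,b2)) := by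
        rw [← hTmem _ hc', ← hTmem _ hc, h]
      rcases Nat.eq_or_lt_of_le hge with h2 | h2
      · -- same column b2 = a2
        subst h2
        rcases lt_trichotomy a1 b1 with hr | hr | hr
        · have := hT.2.2.2 a1 b1 b2 hc' hc hr
          omega
        · rw [hr] at hlt; omega
        · have := hstd.1.2.2.2 b1 a1 b2 hc hc' hr
          omega
      · -- b2 < a2
        rcases lt_trichotomy a1 b1 with hr | hr | hr
        · have := hws (S (b1,b2)) (S (a1,a2)) (a1,a2) (b1,b2) (hSb _ hc').1
            (hSb _ hc).2 hlt hc' hc rfl rfl hr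
          omega
        · subst hr
          have := hstd.1.2.2.1 a1 b2 a2 hc hc' h2.le
          omega
        · have := ssyt_nw hcl hT hr h2.le hc hc'
          omega
    have hstdzT : stdzOn D T = S := by
      funext c
      by_cases hc : c ∈ D
      · rw [stdz_eq hc]
        have hfeq : D.filter (fun a => CRel T a c) = D.filter (fun a => S a < S c) := by
          ext a
          simp only [Finset.mem_filter, and_congr_right_iff]
          intro ha
          constructor
          · intro hrel
            rcases lt_trichotomy (S a) (S c) with h | h | h
            · exact h
            · have hac := hSinj a ha c hc h
              rw [hac] at hrel
              exact absurd hrel (CRel.irrefl c)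
            · exact absurd (hrel.trans (hkey c hc a ha h)) (CRel.irrefl a)
          · exact fun h => hkey a ha c hc h
        have hcard : (D.filter (fun a => S a < S c)).card = S c - 1 := by
          have hinj : Set.InjOn S (D.filter (fun a => S a < S c)) := fun a ha b hb he =>
            hSinj a (Finset.mem_filter.1 ha).1 b (Finset.mem_filter.1 hb).1 he
          have himg : (D.filter (fun a => S a < S c)).image S = Finset.Icc 1 (S c - 1) := by
            ext k
            simp only [Finset.mem_image, Finset.mem_filter, Finset.mem_Icc]
            constructor
            · rintro ⟨a, ⟨ha, hlt⟩, rfl⟩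
              have := hSb a ha; omega
            · rintro ⟨hk1, hk2⟩
              have hb := hSb c hc
              obtain ⟨u, ⟨hu, huk⟩, _⟩ := hstd.2 k hk1 (by omega)
              exact ⟨u, ⟨hu, by omega⟩, huk⟩
          rw [← Finset.card_image_of_injOn hinj, himg, Nat.card_Icc]
          omega
        have := (hSb c hc).1
        rw [hfeq, hcard]
        omega
      · rw [(hS0 c hc)]
        simp only [stdzOn, if_neg hc]
    have hwordT : wordOf D T = w := by
      funext k
      by_cases hk : 1 ≤ k ∧ k ≤ D.card
      · obtain ⟨u, ⟨hu, huk⟩, huniq⟩ := hstd.2 k hk.1 hk.2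
        have hfil : D.filter (fun c => stdzOn D T c = k) = {u} := by
          ext a
          simp only [Finset.mem_filter, Finset.mem_singleton, hstdzT]
          constructor
          · rintro ⟨ha, hak⟩; exact huniq a ⟨ha, hak⟩
          · rintro rfl; exact ⟨hu, huk⟩
        rw [wordOf, hfil, Finset.sum_singleton, hTmem u hu, huk]
      · have hfk : D.filter (fun c => stdzOn D T c = k) = ∅ := by
          apply Finset.filter_false_of_mem
          intro a ha
          simp only [hstdzT]
          have := hSb a ha; omega
        rw [wordOf, hfk, Finset.sum_empty]
        exact (hw0 k (by omega)).symm
    exact ⟨T, hT, by simp only [hstdzT, hwordT]⟩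
end
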